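/- Let H be a connected component of a graph G with e(H)/e(G) > ĥ_H. Then in every modularity-optimal partition of G, the vertex set V(H) is split into at least two parts. -/

import Mathlib

open Finset
open scoped Classical

noncomputable section

variable {V : Type*} [Fintype V]

/-- Number of edges between `A` and `B` (each cross edge counted once when `A`,`B` disjoint). -/
def ecut (G : SimpleGraph V) (A B : Finset V) : ℝ :=
  ((A ×ˢ B).filter fun p => G.Adj p.1 p.2).card

/-- Number of edges inside `A`. -/
def ein (G : SimpleGraph V) (A : Finset V) : ℝ := ecut G A A / 2

/-- Volume of a vertex set: sum of degrees. -/
def gvol (G : SimpleGraph V) (A : Finset V) : ℝ := ∑ v ∈ A, (G.degree v : ℝ)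

/-- Number of edges of `G`. -/
def edgecount (G : SimpleGraph V) : ℝ := (G.edgeFinset.card : ℝ)

/-- Conductance (Cheeger constant) `h_G`. -/
def conduct (G : SimpleGraph V) : ℝ :=
  sInf { x | ∃ A : Finset V, A.Nonempty ∧ A ≠ univ ∧
    x = ecut G A Aᶜ / min (gvol G A) (gvol G Aᶜ) }

/-- Expansion-by-products `ĥ_G`. -/
def hhat (G : SimpleGraph V) : ℝ :=
  sInf { x | ∃ A : Finset V, A.Nonempty ∧ A ≠ univ ∧
    x = ecut G A Aᶜ * gvol G univ / (gvol G A * gvol G Aᶜ) }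

/-- Modularity score of a vertex partition. -/
def modScore (G : SimpleGraph V) (P : Finpartition (univ : Finset V)) : ℝ :=
  (∑ A ∈ P.parts, ein G A) / edgecount G
    - (∑ A ∈ P.parts, (gvol G A) ^ 2) / (4 * (edgecount G) ^ 2)

/-- Modularity `q*(G)`: maximum modularity score over vertex partitions. -/
def modularity (G : SimpleGraph V) : ℝ :=
  sSup { x | ∃ P : Finpartition (univ : Finset V), x = modScore G P }

/-- Expansion-by-products of the subgraph of `G` on a vertex set `S` (all of whose edges stay
inside `S` when `S` is a union of components): minimum over nonempty proper `U ⊆ S` of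
`e(U, S∖U)·vol(S)/(vol(U)·vol(S∖U))`. -/
def hhatOn {V : Type*} [Fintype V] (G : SimpleGraph V) (S : Finset V) : ℝ :=
  sInf { x | ∃ U : Finset V, U ⊆ S ∧ U.Nonempty ∧ U ≠ S ∧
    x = ecut G U (S \ U) * gvol G S / (gvol G U * gvol G (S \ U)) }


set_option linter.unusedSectionVars false in
lemma ecut_eq_double (G : SimpleGraph V) (A B : Finset V) :
    ecut G A B = ∑ a ∈ A, ∑ b ∈ B, (if G.Adj a b then (1:ℝ) else 0) := by
  unfold ecut
  rw [Finset.card_filter]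
  push_cast
  rw [Finset.sum_product]

lemma ecut_eq_sum (G : SimpleGraph V) (A B : Finset V) :
    ecut G A B = ∑ a ∈ A, ((B.filter fun b => G.Adj a b).card : ℝ) := by
  rw [ecut_eq_double]
  refine Finset.sum_congr rfl fun a _ => ?_
  rw [Finset.card_filter]
  push_cast
  rfl

lemma ecut_comm (G : SimpleGraph V) (A B : Finset V) : ecut G A B = ecut G B A := by
  rw [ecut_eq_double, ecut_eq_double, Finset.sum_comm]
  simp_rw [SimpleGraph.adj_comm]

set_option linter.unusedSectionVars false in
lemma ecut_nonneg (G : SimpleGraph V) (A B : Finset V) : 0 ≤ ecut G A B := by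
  unfold ecut; positivity

lemma ecut_union_right (G : SimpleGraph V) (A B C : Finset V) (h : Disjoint B C) :
    ecut G A (B ∪ C) = ecut G A B + ecut G A C := by
  rw [ecut_eq_double, ecut_eq_double, ecut_eq_double, ← Finset.sum_add_distrib]
  refine Finset.sum_congr rfl fun a _ => ?_
  rw [Finset.sum_union h]

lemma ecut_union_left (G : SimpleGraph V) (A B C : Finset V) (h : Disjoint A B) :
    ecut G (A ∪ B) C = ecut G A C + ecut G B C := by
  rw [ecut_comm, ecut_union_right G C A B h, ecut_comm G A C, ecut_comm G B C]

set_option linter.unusedSectionVars false in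
lemma gvol_nonneg (G : SimpleGraph V) (A : Finset V) : 0 ≤ gvol G A := by
  unfold gvol; positivity

lemma gvol_mono (G : SimpleGraph V) {A B : Finset V} (h : A ⊆ B) : gvol G A ≤ gvol G B :=
  Finset.sum_le_sum_of_subset_of_nonneg h (by intros; positivity)

lemma deg_pos_of_reachable_ne {G : SimpleGraph V} {u w : V} (h : G.Reachable u w)
    (hne : u ≠ w) : 0 < G.degree u := by
  rw [G.degree_pos_iff_exists_adj]
  obtain ⟨p⟩ := h
  cases p with
  | nil => exact absurd rfl hne
  | cons h _ => exact ⟨_, h⟩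

/-- If `H` is a connected component of `G` (vertex set `S`) with
`e(H)/e(G) > ĥ_H`, then every modularity-optimal partition of `G` splits `H` into at
least two parts. -/
theorem stmt11 {V : Type*} [Fintype V] (G : SimpleGraph V) (hG : G.edgeFinset.Nonempty)
    (c : G.ConnectedComponent) (S : Finset V)
    (hS : S = univ.filter fun v => G.connectedComponentMk v = c)
    (hgt : hhatOn G S < ein G S / edgecount G) :
    ∀ P : Finpartition (univ : Finset V), modScore G P = modularity G →
      ∃ A ∈ P.parts, ∃ B ∈ P.parts, A ≠ B ∧ (A ∩ S).Nonempty ∧ (B ∩ S).Nonempty := by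
  intro P hP
  by_contra hcon
  push_neg at hcon
  -- basic facts
  have he : (0:ℝ) < edgecount G := by
    unfold edgecount; exact_mod_cast hG.card_pos
  have memS : ∀ v : V, v ∈ S ↔ G.connectedComponentMk v = c := by
    intro v; subst hS; simp
  have adjS : ∀ {u v : V}, u ∈ S → G.Adj u v → v ∈ S := by
    intro u v hu hadj
    rw [memS] at hu ⊢
    rw [← hu]
    exact (SimpleGraph.ConnectedComponent.connectedComponentMk_eq_of_adj hadj).symm
  have reachS : ∀ {u v : V}, u ∈ S → v ∈ S → G.Reachable u v := by
    intro u v hu hv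
    rw [memS] at hu hv
    exact SimpleGraph.ConnectedComponent.exact (hu.trans hv.symm)
  obtain ⟨v₀, hv₀c⟩ := c.exists_rep
  have hv₀S : v₀ ∈ S := (memS v₀).2 hv₀c
  -- the infimum set is nonempty and finite
  set T : Set ℝ := { x | ∃ U : Finset V, U ⊆ S ∧ U.Nonempty ∧ U ≠ S ∧
    x = ecut G U (S \ U) * gvol G S / (gvol G U * gvol G (S \ U)) } with hT
  have hTfin : T.Finite := by
    apply Set.Finite.subset (Set.finite_range
      (fun U : Finset V => ecut G U (S \ U) * gvol G S / (gvol G U * gvol G (S \ U))))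
    rintro x ⟨U, -, -, -, rfl⟩
    exact ⟨U, rfl⟩
  have hTne : T.Nonempty := by
    by_contra hTe
    rw [Set.not_nonempty_iff_eq_empty] at hTe
    have h0 : hhatOn G S = 0 := by
      rw [hhatOn, ← hT, hTe, Real.sInf_empty]
    rw [h0] at hgt
    have heinpos : 0 < ein G S := by
      have := (div_pos_iff.1 hgt)
      rcases this with ⟨h1, _⟩ | ⟨_, h2⟩
      · exact h1
      · linarith
    have hcutpos : 0 < ecut G S S := by unfold ein at heinpos; linarith
    have hfne : ((S ×ˢ S).filter fun p => G.Adj p.1 p.2).Nonempty := by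
      rw [Finset.nonempty_iff_ne_empty]
      intro h
      rw [ecut, h] at hcutpos; simp at hcutpos
    obtain ⟨⟨u, v⟩, hp⟩ := hfne
    simp only [Finset.mem_filter, Finset.mem_product] at hp
    obtain ⟨⟨huS, hvS⟩, hadj⟩ := hp
    have : (ecut G {u} (S \ {u}) * gvol G S / (gvol G {u} * gvol G (S \ {u}))) ∈ T := by
      refine ⟨{u}, ?_, ⟨u, Finset.mem_singleton_self u⟩, ?_, rfl⟩
      · simpa using huS
      · intro h
        have : v ∈ ({u} : Finset V) := h ▸ hvS
        simp only [Finset.mem_singleton] at this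
        exact hadj.ne this.symm
    rw [hTe] at this; exact this
  have hmem : hhatOn G S ∈ T := hTne.csInf_mem hTfin
  obtain ⟨U, hUS, hUne, hUneS, hval⟩ := hmem
  have hSU_ne : (S \ U).Nonempty := by
    rw [Finset.sdiff_nonempty]
    intro h
    exact hUneS (Finset.Subset.antisymm hUS h)
  -- positivity of volumes
  have hdegS : ∀ u ∈ S, (0:ℝ) < (G.degree u : ℝ) := by
    intro u hu
    obtain ⟨a, haU⟩ := hUne
    obtain ⟨b, hbSU⟩ := hSU_ne
    have haS : a ∈ S := hUS haU
    have hbS : b ∈ S := (Finset.mem_sdiff.1 hbSU).1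
    have hab : a ≠ b := by
      intro h; exact (Finset.mem_sdiff.1 hbSU).2 (h ▸ haU)
    by_cases hua : u = a
    · exact_mod_cast deg_pos_of_reachable_ne (reachS hu hbS) (hua ▸ hab)
    · exact_mod_cast deg_pos_of_reachable_ne (reachS hu haS) hua
  have hvolU : 0 < gvol G U := by
    obtain ⟨a, haU⟩ := hUne
    exact Finset.sum_pos' (fun i _ => by positivity) ⟨a, haU, hdegS a (hUS haU)⟩
  have hvolSU : 0 < gvol G (S \ U) := by
    obtain ⟨b, hb⟩ := hSU_ne
    exact Finset.sum_pos' (fun i _ => by positivity)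
      ⟨b, hb, hdegS b (Finset.mem_sdiff.1 hb).1⟩
  -- vol S = 2 * ein S
  have hvolS : gvol G S = ecut G S S := by
    rw [ecut_eq_sum]
    refine Finset.sum_congr rfl fun v hv => ?_
    have hnb : G.neighborFinset v = S.filter fun u => G.Adj v u := by
      ext u
      simp only [SimpleGraph.mem_neighborFinset, Finset.mem_filter]
      exact ⟨fun h => ⟨adjS hv h, h⟩, fun h => h.2⟩
    rw [← SimpleGraph.card_neighborFinset_eq_degree, hnb]
  have heinS : gvol G S = 2 * ein G S := by rw [hvolS, ein]; ring
  have heinSpos : 0 < ein G S := by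
    have h0 : 0 ≤ hhatOn G S := by
      rw [hval]
      exact div_nonneg (mul_nonneg (ecut_nonneg G _ _) (gvol_nonneg G _))
        (mul_nonneg (gvol_nonneg G _) (gvol_nonneg G _))
    have : 0 < ein G S / edgecount G := lt_of_le_of_lt h0 hgt
    rcases div_pos_iff.1 this with ⟨h1, _⟩ | ⟨_, h2⟩
    · exact h1
    · linarith
  -- the key inequality
  have hkey : ecut G U (S \ U) * (2 * edgecount G) < gvol G U * gvol G (S \ U) := by
    have h1 : ecut G U (S \ U) * gvol G S / (gvol G U * gvol G (S \ U))
        < ein G S / edgecount G := by rw [← hval]; exact hgt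
    rw [div_lt_div_iff₀ (by positivity) he] at h1
    rw [heinS] at h1
    nlinarith [heinSpos, hvolU, hvolSU]
  -- find the unique part A containing S
  obtain ⟨A, hA, hv₀A⟩ := P.exists_mem (Finset.mem_univ v₀)
  have hSA : S ⊆ A := by
    intro w hw
    obtain ⟨B, hB, hwB⟩ := P.exists_mem (Finset.mem_univ w)
    have : B = A := by
      by_contra hne
      exact (Finset.nonempty_iff_ne_empty.1 ⟨w, Finset.mem_inter.2 ⟨hwB, hw⟩⟩)
        (hcon A hA B hB (Ne.symm hne) ⟨v₀, Finset.mem_inter.2 ⟨hv₀A, hv₀S⟩⟩)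
    exact this ▸ hwB
  have hUA : U ⊆ A := hUS.trans hSA
  have hSUAU : S \ U ⊆ A \ U := Finset.sdiff_subset_sdiff hSA (Finset.Subset.refl U)
  have hAU_ne : (A \ U).Nonempty := hSU_ne.mono hSUAU
  have hA_eq : U ∪ (A \ U) = A := Finset.union_sdiff_of_subset hUA
  have hdUAU : Disjoint U (A \ U) := Finset.disjoint_sdiff
  -- edges from U to A\U are edges from U to S\U
  have hcutAU : ecut G U (A \ U) = ecut G U (S \ U) := by
    rw [ecut_eq_sum, ecut_eq_sum]
    refine Finset.sum_congr rfl fun a ha => ?_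
    have hfe : ((A \ U).filter fun b => G.Adj a b) = (S \ U).filter fun b => G.Adj a b := by
      ext x
      simp only [Finset.mem_filter, Finset.mem_sdiff]
      constructor
      · rintro ⟨⟨-, hxU⟩, hadj⟩
        exact ⟨⟨adjS (hUS ha) hadj, hxU⟩, hadj⟩
      · rintro ⟨⟨hxS, hxU⟩, hadj⟩
        exact ⟨⟨hSA hxS, hxU⟩, hadj⟩
    rw [hfe]
  -- disjointness facts for the new partition
  have hUdisj : ∀ B ∈ P.parts.erase A, Disjoint U B := fun B hB =>
    (P.disjoint (Finset.mem_coe.2 hA) (Finset.mem_coe.2 (Finset.mem_of_mem_erase hB))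
      (Ne.symm (Finset.ne_of_mem_erase hB))).mono_left hUA
  have hAUdisj : ∀ B ∈ P.parts.erase A, Disjoint (A \ U) B := fun B hB =>
    (P.disjoint (Finset.mem_coe.2 hA) (Finset.mem_coe.2 (Finset.mem_of_mem_erase hB))
      (Ne.symm (Finset.ne_of_mem_erase hB))).mono_left Finset.sdiff_subset
  have hUneAU : U ≠ A \ U := by
    intro h
    have : Disjoint U U := by nth_rewrite 2 [h]; exact hdUAU
    exact hUne.ne_empty (by rw [← Finset.bot_eq_empty]; exact disjoint_self.1 this)
  have hUnotmem : U ∉ P.parts.erase A := fun h =>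
    hUne.ne_empty (by rw [← Finset.bot_eq_empty]; exact disjoint_self.1 (hUdisj U h))
  have hAUnotmem : (A \ U) ∉ P.parts.erase A := fun h =>
    hAU_ne.ne_empty (by rw [← Finset.bot_eq_empty]; exact disjoint_self.1 (hAUdisj (A \ U) h))
  have hUnotmem' : U ∉ insert (A \ U) (P.parts.erase A) := by
    simp only [Finset.mem_insert]
    rintro (h | h)
    · exact hUneAU h
    · exact hUnotmem h
  -- build the refined partition
  set parts' : Finset (Finset V) := insert U (insert (A \ U) (P.parts.erase A)) with hparts'
  have hsupIndep : parts'.SupIndep id := by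
    rw [Finset.supIndep_iff_pairwiseDisjoint]
    intro a ha b hb hab
    simp only [hparts', Finset.coe_insert, Set.mem_insert_iff, Finset.mem_coe] at ha hb
    rcases ha with rfl | rfl | ha <;> rcases hb with rfl | rfl | hb
    · exact absurd rfl hab
    · exact hdUAU
    · exact hUdisj _ hb
    · exact hdUAU.symm
    · exact absurd rfl hab
    · exact hAUdisj _ hb
    · exact (hUdisj _ ha).symm
    · exact (hAUdisj _ ha).symm
    · exact P.disjoint (Finset.mem_coe.2 (Finset.mem_of_mem_erase ha)) (Finset.mem_coe.2 (Finset.mem_of_mem_erase hb)) hab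
  have hsup : parts'.sup id = Finset.univ := by
    apply le_antisymm
    · exact Finset.sup_le fun B _ => Finset.subset_univ B
    · calc (Finset.univ : Finset V) = P.parts.sup id := P.sup_parts.symm
        _ ≤ parts'.sup id := by
            refine Finset.sup_le fun B hB => ?_
            by_cases hBA : B = A
            · subst hBA
              have h1 : id U ≤ parts'.sup id := Finset.le_sup (Finset.mem_insert_self _ _)
              have h2 : id (B \ U) ≤ parts'.sup id :=
                Finset.le_sup (Finset.mem_insert_of_mem (Finset.mem_insert_self _ _))
              calc id B = U ⊔ (B \ U) := by
                    rw [Finset.sup_eq_union, hA_eq]; rfl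
                _ ≤ parts'.sup id := sup_le h1 h2
            · exact Finset.le_sup (Finset.mem_insert_of_mem (Finset.mem_insert_of_mem
                (Finset.mem_erase.2 ⟨hBA, hB⟩)))
  have hnotbot : ⊥ ∉ parts' := by
    intro h
    rw [Finset.bot_eq_empty, hparts'] at h
    simp only [Finset.mem_insert] at h
    rcases h with h | h | h
    · exact hUne.ne_empty h.symm
    · exact hAU_ne.ne_empty h.symm
    · exact P.bot_notMem (by rw [Finset.bot_eq_empty]; exact Finset.mem_of_mem_erase h)
  set Q : Finpartition (Finset.univ : Finset V) := ⟨parts', hsupIndep, hsup, hnotbot⟩ with hQ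
  have hsum : ∀ f : Finset V → ℝ, ∑ B ∈ Q.parts, f B
      = f U + f (A \ U) + (∑ B ∈ P.parts, f B - f A) := by
    intro f
    show ∑ B ∈ parts', f B = _
    rw [hparts', Finset.sum_insert hUnotmem', Finset.sum_insert hAUnotmem,
      Finset.sum_erase_eq_sub hA]
    ring
  have heinA : ein G A = ein G U + ein G (A \ U) + ecut G U (A \ U) := by
    have hsplit : ecut G A A = ecut G U U + ecut G (A \ U) (A \ U) + 2 * ecut G U (A \ U) := by
      conv_lhs => rw [← hA_eq]
      rw [ecut_union_left G U (A \ U) _ hdUAU, ecut_union_right G U U (A \ U) hdUAU,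
        ecut_union_right G (A \ U) U (A \ U) hdUAU, ecut_comm G (A \ U) U]
      ring
    unfold ein
    rw [hsplit]; ring
  have hgvolA : gvol G A = gvol G U + gvol G (A \ U) := by
    unfold gvol
    conv_lhs => rw [← hA_eq]
    exact Finset.sum_union hdUAU
  have hscore : modScore G Q - modScore G P
      = (gvol G U * gvol G (A \ U) - 2 * edgecount G * ecut G U (A \ U))
        / (2 * edgecount G ^ 2) := by
    unfold modScore
    rw [hsum, hsum, heinA, hgvolA]
    field_simp
    ring
  have hpos : 0 < modScore G Q - modScore G P := by
    rw [hscore]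
    apply div_pos _ (by positivity)
    rw [hcutAU]
    have hb : gvol G (S \ U) ≤ gvol G (A \ U) := gvol_mono G hSUAU
    nlinarith [hvolU]
  have hbdd : BddAbove { x | ∃ P : Finpartition (univ : Finset V), x = modScore G P } := by
    have hrange : { x | ∃ P : Finpartition (univ : Finset V), x = modScore G P }
        = Set.range (modScore G) := by
      ext x; simp [eq_comm, Set.mem_range]
    rw [hrange]
    exact (Set.finite_range _).bddAbove
  have hle : modScore G Q ≤ modularity G := le_csSup hbdd ⟨Q, rfl⟩
  rw [← hP] at hle
  linarith
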